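/- arXiv:2105.03187 — 9 statements merged into one kernel-verified Lean document; each statement's English description precedes it below -/
import Mathlib

section
/- Suppose every vertex of V has at least one in-neighbour or out-neighbour (i.e., for every i ∈ V there exists j with (i,j) ∈ E or (j,i) ∈ E). If the model set M(E) is identifiable from (R, C), then R ∪ C = V. -/
open Matrix

/-- The model set `M(E)`: matrices `G` over `RatFunc ℝ` whose sparsity pattern matches the
edge set `E` (i.e. `G j i ≠ 0 ↔ (i,j) ∈ E`) and such that `I - G` is invertible. -/
def ModelSet {V : Type*} [Fintype V] [DecidableEq V] (E : Finset (V × V)) :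
    Set (Matrix V V (RatFunc ℝ)) :=
  {G | (∀ i j : V, G j i ≠ 0 ↔ (i, j) ∈ E) ∧ IsUnit (1 - G)}

/-- The network response matrix `T(G) = (I - G)⁻¹`. -/
noncomputable def netT {V : Type*} [Fintype V] [DecidableEq V]
    (G : Matrix V V (RatFunc ℝ)) : Matrix V V (RatFunc ℝ) := (1 - G)⁻¹

/-- Identifiability of the model set `M(E)` from excited vertices `R` and measured
vertices `C`. -/
def Identifiable {V : Type*} [Fintype V] [DecidableEq V]
    (E : Finset (V × V)) (R C : Finset V) : Prop :=
  ∀ G₀ ∈ ModelSet E, ∀ G₁ ∈ ModelSet E,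
    (∀ c ∈ C, ∀ r ∈ R, netT G₁ c r = netT G₀ c r) → G₁ = G₀

/-- If every vertex has an in- or out-neighbour and `M(E)` is identifiable from `(R, C)`,
then every vertex is excited or measured: `R ∪ C = V`. -/
theorem stmt_0 {V : Type*} [Fintype V] [DecidableEq V]
    (E : Finset (V × V)) (hloop : ∀ i : V, (i, i) ∉ E)
    (R C : Finset V)
    (hcov : ∀ i : V, ∃ j : V, (i, j) ∈ E ∨ (j, i) ∈ E)
    (hid : Identifiable E R C) :
    R ∪ C = Finset.univ := by
  classical
  haveI : CharZero (RatFunc ℝ) :=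
    charZero_of_injective_algebraMap (algebraMap ℝ (RatFunc ℝ)).injective
  by_contra hne
  rw [Finset.eq_univ_iff_forall] at hne
  push_neg at hne
  obtain ⟨v, hv⟩ := hne
  rw [Finset.mem_union] at hv
  push_neg at hv
  obtain ⟨hvR, hvC⟩ := hv
  -- the base model `G`
  set φ : Polynomial ℝ →+* RatFunc ℝ := (algebraMap (Polynomial ℝ) (RatFunc ℝ)) with hφ
  have hφinj : Function.Injective φ := RatFunc.algebraMap_injective ℝ
  set Ap : Matrix V V (Polynomial ℝ) :=
    Matrix.of (fun j i => if (i, j) ∈ E then Polynomial.X else 0) with hAp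
  set G : Matrix V V (RatFunc ℝ) := Ap.map φ with hG
  have hEntry : ∀ i j : V, G j i = if (i, j) ∈ E then φ Polynomial.X else 0 := by
    intro i j
    simp only [hG, Matrix.map_apply, hAp, Matrix.of_apply]
    split_ifs <;> simp
  have hX : (φ Polynomial.X : RatFunc ℝ) ≠ 0 :=
    (map_ne_zero_iff φ hφinj).mpr Polynomial.X_ne_zero
  have hsp : ∀ i j : V, G j i ≠ 0 ↔ (i, j) ∈ E := by
    intro i j
    rw [hEntry]
    split_ifs with h
    · exact ⟨fun _ => h, fun _ => hX⟩
    · simp [h]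
  have hmap1 : (1 - Ap).map φ = 1 - G := by
    ext i j
    simp [Matrix.map_apply, Matrix.one_apply, hG, apply_ite φ]
  have hdetp : (1 - Ap).det ≠ 0 := by
    intro h0
    have := congrArg (Polynomial.evalRingHom (0 : ℝ)) h0
    rw [RingHom.map_det] at this
    rw [RingHom.mapMatrix_apply] at this
    have h1 : (1 - Ap).map (Polynomial.evalRingHom (0 : ℝ)) = 1 := by
      ext i j
      simp only [Matrix.map_apply, Matrix.sub_apply, Matrix.one_apply, hAp, Matrix.of_apply,
        map_sub]
      split_ifs <;> simp
    rw [h1] at this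
    simp at this
  have hdet : (1 - G).det ≠ 0 := by
    rw [← hmap1, ← RingHom.mapMatrix_apply, ← RingHom.map_det]
    exact (map_ne_zero_iff φ hφinj).mpr hdetp
  have hGmem : G ∈ ModelSet E :=
    ⟨hsp, (Matrix.isUnit_iff_isUnit_det _).mpr (isUnit_iff_ne_zero.mpr hdet)⟩
  -- the scaling matrices
  set d : V → RatFunc ℝ := fun i => if i = v then 2 else 1 with hd
  have hd0 : ∀ i, d i ≠ 0 := by
    intro i; simp only [hd]; split_ifs <;> norm_num
  set P : Matrix V V (RatFunc ℝ) := Matrix.diagonal d with hP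
  set Q : Matrix V V (RatFunc ℝ) := Matrix.diagonal (fun i => (d i)⁻¹) with hQ
  have hPQ : P * Q = 1 := by
    rw [hP, hQ, Matrix.diagonal_mul_diagonal]
    rw [show (fun i => d i * (d i)⁻¹) = fun _ : V => (1 : RatFunc ℝ) from
      funext fun i => mul_inv_cancel₀ (hd0 i), Matrix.diagonal_one]
  have hQP : Q * P = 1 := by
    rw [hQ, hP, Matrix.diagonal_mul_diagonal]
    rw [show (fun i => (d i)⁻¹ * d i) = fun _ : V => (1 : RatFunc ℝ) from
      funext fun i => inv_mul_cancel₀ (hd0 i), Matrix.diagonal_one]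
  set G' : Matrix V V (RatFunc ℝ) := P * G * Q with hG'
  have hG'entry : ∀ i j : V, G' j i = d j * G j i * (d i)⁻¹ := by
    intro i j
    rw [hG', Matrix.mul_diagonal, Matrix.diagonal_mul]
  have h1G' : 1 - G' = P * (1 - G) * Q := by
    rw [Matrix.mul_sub, Matrix.sub_mul, Matrix.mul_one, hPQ, hG']
  have hG'mem : G' ∈ ModelSet E := by
    constructor
    · intro i j
      rw [hG'entry, ← hsp i j]
      constructor
      · intro h h0; exact h (by rw [h0]; ring)
      · intro h h0
        rcases mul_eq_zero.mp h0 with h1 | h1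
        · rcases mul_eq_zero.mp h1 with h2 | h2
          · exact hd0 j h2
          · exact h h2
        · exact inv_ne_zero (hd0 i) h1
    · rw [h1G']
      rw [Matrix.isUnit_iff_isUnit_det, Matrix.det_mul, Matrix.det_mul]
      rw [isUnit_iff_ne_zero]
      have hdP : P.det ≠ 0 := by
        rw [hP, Matrix.det_diagonal]
        exact Finset.prod_ne_zero_iff.mpr fun i _ => hd0 i
      have hdQ : Q.det ≠ 0 := by
        rw [hQ, Matrix.det_diagonal]
        exact Finset.prod_ne_zero_iff.mpr fun i _ => inv_ne_zero (hd0 i)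
      exact mul_ne_zero (mul_ne_zero hdP hdet) hdQ
  have hT : netT G' = P * netT G * Q := by
    rw [netT, netT, h1G', Matrix.mul_inv_rev, Matrix.mul_inv_rev]
    rw [Matrix.inv_eq_right_inv hQP, Matrix.inv_eq_right_inv hPQ, Matrix.mul_assoc]
  have hagree : ∀ c ∈ C, ∀ r ∈ R, netT G' c r = netT G c r := by
    intro c hc r hr
    have hcv : c ≠ v := fun h => hvC (h ▸ hc)
    have hrv : r ≠ v := fun h => hvR (h ▸ hr)
    rw [hT, hP, hQ, Matrix.mul_diagonal, Matrix.diagonal_mul]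
    simp [hd, hcv, hrv]
  have heq : G' = G := hid G hGmem G' hG'mem hagree
  obtain ⟨j, hj⟩ := hcov v
  rcases hj with hj | hj
  · -- (v, j) ∈ E : column v
    have hjv : j ≠ v := fun h => hloop v (h ▸ hj)
    have hne0 : G j v ≠ 0 := (hsp v j).mpr hj
    have : G' j v = G j v := by rw [heq]
    rw [hG'entry] at this
    simp only [hd, hjv, if_neg hjv, if_pos rfl, one_mul] at this
    have h2 : (2 : RatFunc ℝ)⁻¹ = 1 :=
      mul_left_cancel₀ hne0 (by rw [mul_one]; exact this)
    norm_num at h2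
  · -- (j, v) ∈ E : row v
    have hjv : j ≠ v := fun h => hloop v (h ▸ hj)
    have hne0 : G v j ≠ 0 := (hsp j v).mpr hj
    have : G' v j = G v j := by rw [heq]
    rw [hG'entry] at this
    simp only [hd, if_pos rfl, if_neg hjv, inv_one, mul_one] at this
    have h2 : (2 : RatFunc ℝ) = 1 := by
      have h3 : G v j * 2 = G v j * 1 := by rw [mul_one, mul_comm]; exact this
      exact mul_left_cancel₀ hne0 h3
    norm_num at h2
end

section
/- For any two distinct vertices i ≠ j of V, the entry 𝕋 j i of the generic response matrix is nonzero if and only if the pair (i,j) belongs to the transitive closure of the edge relation of (V,E), i.e., if and only if there is a directed path from i to j. -/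
open Matrix

/-- The generic network matrix `𝔾` over the fraction field of `ℝ[Xₑ : e ∈ E]`:
`𝔾 j i = X (i,j)` if `(i,j) ∈ E`, and `0` otherwise. -/
noncomputable def genG {V : Type*} [Fintype V] [DecidableEq V] (E : Finset (V × V)) :
    Matrix V V (FractionRing (MvPolynomial {e : V × V // e ∈ E} ℝ)) :=
  Matrix.of fun j i =>
    if h : (i, j) ∈ E then
      algebraMap (MvPolynomial {e : V × V // e ∈ E} ℝ) _ (MvPolynomial.X ⟨(i, j), h⟩)
    else 0

/-- The generic response matrix `𝕋 = (I - 𝔾)⁻¹`. -/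
noncomputable def genT {V : Type*} [Fintype V] [DecidableEq V] (E : Finset (V × V)) :
    Matrix V V (FractionRing (MvPolynomial {e : V × V // e ∈ E} ℝ)) :=
  (1 - genG E)⁻¹

/-!
Matrices whose `(a, b)` entry vanishes unless `b` is reachable from `a` form a subalgebra of
the matrix algebra, and a finite-dimensional subalgebra contains the inverse of each of its
elements that is invertible in the ambient ring. Since `𝔾` lies in the
subalgebra of the reversed edge relation, so does `𝕋 = (1 - 𝔾)⁻¹`: an entry `𝕋 j i ≠ 0` with
`i ≠ j` forces a path from `i` to `j`.

Conversely `𝕋 = det(1 - 𝔾)⁻¹ • adj(1 - 𝔾)` with a polynomial adjugate, and specialising every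
edge variable to one variable `t` maps `adj(1 - 𝔾)` to `det(1 - tA) • ∑ₖ tᵏ Aᵏ` in `ℝ⟦t⟧`,
where `A j i = 1` if `(i, j) ∈ E` and `0` otherwise. A path from `i` to `j` of length `k` makes `(Aᵏ) j i`
positive, so the power series, and hence `𝕋 j i`, is nonzero.
-/

namespace Matrix

variable {n : Type*} [Fintype n] [DecidableEq n]

def reflTransGenSubalgebra {R : Type*} [CommSemiring R] (r : n → n → Prop) :
    Subalgebra R (Matrix n n R) where
  carrier := {M | ∀ a b, M a b ≠ 0 → Relation.ReflTransGen r a b}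
  mul_mem' {M N} hM hN a b h := by
    obtain ⟨c, -, hc⟩ := Finset.exists_ne_zero_of_sum_ne_zero h
    exact (hM a c (left_ne_zero_of_mul hc)).trans (hN c b (right_ne_zero_of_mul hc))
  add_mem' {M N} hM hN a b h := by
    by_cases hMab : M a b = 0
    · exact hN a b (by simpa [hMab] using h)
    · exact hM a b hMab
  algebraMap_mem' c a b h := by
    obtain rfl : a = b := by
      by_contra hab
      exact h (by simp [algebraMap_matrix_apply, hab])
    exact .refl

end Matrix

theorem Subalgebra.ringInverse_mem {K A : Type*} [Field K] [Ring A] [Algebra K A]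
    (S : Subalgebra K A) [FiniteDimensional K S] {x : A} (hx : x ∈ S) : Ring.inverse x ∈ S := by
  by_cases hu : IsUnit x
  · have : IsArtinianRing S := .of_finite K S
    have hreg : IsRightRegular (⟨x, hx⟩ : S) := fun y z h =>
      Subtype.ext (hu.isRegular.right (congrArg Subtype.val h))
    obtain ⟨y, hy⟩ := IsArtinianRing.isUnit_iff_isRightRegular.mpr hreg
    obtain rfl : ((Units.map S.val.toMonoidHom y : Aˣ) : A) = x := by simp [hy]
    rw [Ring.inverse_unit, ← map_inv]
    exact (y⁻¹ : Sˣ).val.2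
  · rw [Ring.inverse_non_unit x hu]
    exact S.zero_mem

namespace Matrix

variable {n : Type*} [Fintype n] [DecidableEq n]

theorem det_one_sub_ne_zero_of_map_eq_zero {R S : Type*} [CommRing R] [CommRing S]
    [Nontrivial S] (φ : R →+* S) {M : Matrix n n R} (hM : ∀ a b, φ (M a b) = 0) :
    (1 - M).det ≠ 0 := by
  have hmap : φ.mapMatrix (1 - M) = 1 := by
    ext a b
    simp [hM, one_apply, apply_ite φ]
  have hdet : φ (1 - M).det = 1 := by rw [RingHom.map_det, hmap, det_one]
  intro h
  simp [h] at hdet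

theorem adjugate_eq_det_smul_of_mul_eq_one {R : Type*} [CommRing R] {M N : Matrix n n R}
    (h : M * N = 1) : M.adjugate = M.det • N :=
  calc M.adjugate = M.adjugate * M * N := by rw [Matrix.mul_assoc, h, Matrix.mul_one]
    _ = M.det • N := by rw [adjugate_mul, smul_mul, Matrix.one_mul]

theorem inv_mapMatrix_apply_ne_zero_iff {R K : Type*} [CommRing R] [Field K] (f : R →+* K)
    (hf : Function.Injective f) {M : Matrix n n R} (hM : M.det ≠ 0) (a b : n) :
    (f.mapMatrix M)⁻¹ a b ≠ 0 ↔ M.adjugate a b ≠ 0 := by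
  rw [inv_def, ← RingHom.map_adjugate, ← RingHom.map_det, Ring.inverse_eq_inv, smul_apply,
    smul_eq_mul, RingHom.mapMatrix_apply, map_apply, mul_ne_zero_iff,
    map_ne_zero_iff f hf, and_iff_right (inv_ne_zero ((map_ne_zero_iff f hf).mpr hM))]

section PowerSeries

open PowerSeries

variable {R : Type*} [CommRing R]

noncomputable def neumannSeries (A : Matrix n n R) : Matrix n n R⟦X⟧ :=
  of fun a b => mk fun k => (A ^ k) a b

theorem one_sub_X_smul_mul_neumannSeries (A : Matrix n n R) :
    (1 - (X : R⟦X⟧) • A.map C) * neumannSeries A = 1 := by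
  rw [sub_mul, one_mul, sub_eq_iff_eq_add, smul_mul]
  ext a b (_ | k)
  · simp [neumannSeries, one_apply]
  · simp [neumannSeries, mul_apply, one_apply, apply_ite (coeff (k + 1)), coeff_succ_X_mul,
      pow_succ']

end PowerSeries

theorem exists_pow_apply_pos_of_reflTransGen {R : Type*} [Ring R] [LinearOrder R]
    [IsOrderedRing R] [PosMulStrictMono R] [Nontrivial R] {A : Matrix n n R}
    (hA : ∀ a b, 0 ≤ A a b) {a b : n} (h : Relation.ReflTransGen (fun a b => 0 < A a b) a b) :
    ∃ k, 0 < (A ^ k) a b := by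
  let := toQuiver A
  obtain ⟨p⟩ : Nonempty (Quiver.Path a b) := by
    induction h with
    | refl => exact ⟨.nil⟩
    | tail _ hbc ih => exact ih.map (·.cons ⟨hbc⟩)
  exact ⟨p.length, (pow_apply_pos_iff_nonempty_path hA _ a b).mpr ⟨⟨p, rfl⟩⟩⟩

end Matrix

section GenericNetwork

variable {V : Type*} [Fintype V] [DecidableEq V] (E : Finset (V × V))

noncomputable def genGPoly : Matrix V V (MvPolynomial E ℝ) :=
  of fun j i => if h : (i, j) ∈ E then MvPolynomial.X ⟨(i, j), h⟩ else 0

theorem genG_eq_mapMatrix_genGPoly :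
    genG E = (algebraMap (MvPolynomial E ℝ) _).mapMatrix (genGPoly E) := by
  ext j i
  simp only [genG, genGPoly, RingHom.mapMatrix_apply, map_apply, of_apply]
  split <;> simp

theorem det_one_sub_genGPoly_ne_zero : (1 - genGPoly E).det ≠ 0 :=
  det_one_sub_ne_zero_of_map_eq_zero MvPolynomial.constantCoeff fun j i => by
    simp only [genGPoly, of_apply]
    split <;> simp

theorem genT_apply_ne_zero_iff (i j : V) :
    genT E j i ≠ 0 ↔ (1 - genGPoly E).adjugate j i ≠ 0 := by
  rw [genT, genG_eq_mapMatrix_genGPoly, ← map_one (algebraMap (MvPolynomial E ℝ) _).mapMatrix,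
    ← map_sub, inv_mapMatrix_apply_ne_zero_iff _ (IsFractionRing.injective _ _)
      (det_one_sub_genGPoly_ne_zero E)]

theorem reflTransGen_of_genT_apply_ne_zero {i j : V} (h : genT E j i ≠ 0) :
    Relation.ReflTransGen (fun a b => (a, b) ∈ E) i j := by
  have hG : genG E ∈ reflTransGenSubalgebra (fun b a : V => (a, b) ∈ E) := fun j i h =>
    .single (by by_contra hE; exact h (by simp [genG, hE]))
  have hT : genT E ∈ reflTransGenSubalgebra (fun b a : V => (a, b) ∈ E) := by
    rw [genT, nonsing_inv_eq_ringInverse]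
    exact Subalgebra.ringInverse_mem _ (sub_mem (one_mem _) hG)
  exact Relation.reflTransGen_swap.mp (hT j i h)

open PowerSeries in
theorem adjugate_one_sub_genGPoly_apply_ne_zero {i j : V}
    (h : Relation.TransGen (fun a b => (a, b) ∈ E) i j) :
    (1 - genGPoly E).adjugate j i ≠ 0 := by
  let A : Matrix V V ℝ := of fun j i => if (i, j) ∈ E then 1 else 0
  let φ := (MvPolynomial.aeval (R := ℝ) fun _ : E => (X : ℝ⟦X⟧)).toRingHom
  have hφ : φ.mapMatrix (1 - genGPoly E) = 1 - (X : ℝ⟦X⟧) • A.map C := by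
    rw [map_sub, map_one]
    congr 1
    ext j i
    by_cases hij : (i, j) ∈ E <;> simp [genGPoly, A, hij, φ]
  have hdet : (1 - (X : ℝ⟦X⟧) • A.map C).det ≠ 0 :=
    det_one_sub_ne_zero_of_map_eq_zero constantCoeff fun a b => by simp
  obtain ⟨k, hk⟩ := exists_pow_apply_pos_of_reflTransGen (A := A)
    (fun a b => by simp only [A, of_apply]; split <;> norm_num)
    (Relation.ReflTransGen.mono (fun b a hab => by simp_all [A, Function.swap]) _ _
      (Relation.TransGen.swap _ _ h).to_reflTransGen)
  have hN : neumannSeries A j i ≠ 0 := fun h0 =>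
    hk.ne' (by simpa [neumannSeries] using congrArg (coeff k) h0)
  have hmap := RingHom.map_adjugate φ (1 - genGPoly E)
  rw [hφ, adjugate_eq_det_smul_of_mul_eq_one (one_sub_X_smul_mul_neumannSeries A)] at hmap
  have hentry : φ ((1 - genGPoly E).adjugate j i) =
      (1 - (X : ℝ⟦X⟧) • A.map C).det * neumannSeries A j i := by
    simpa using congrFun (congrFun hmap j) i
  exact fun h0 => mul_ne_zero hdet hN (by rw [← hentry, h0, map_zero])

end GenericNetwork

theorem stmt_3_general {V : Type*} [Fintype V] [DecidableEq V]
    (E : Finset (V × V)) :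
    ∀ i j : V, i ≠ j →
      (genT E j i ≠ 0 ↔ Relation.TransGen (fun a b : V => (a, b) ∈ E) i j) := by
  intro i j hij
  constructor
  · intro h
    exact (Relation.reflTransGen_iff_eq_or_transGen.mp
      (reflTransGen_of_genT_apply_ne_zero E h)).resolve_left hij.symm
  · intro h
    exact (genT_apply_ne_zero_iff E i j).mpr (adjugate_one_sub_genGPoly_apply_ne_zero E h)

/-- For distinct vertices `i ≠ j`, the generic entry `𝕋 j i` is nonzero iff there is a
directed path from `i` to `j`, i.e. iff `(i,j)` is in the transitive closure of `E`. -/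
theorem stmt_3 {V : Type*} [Fintype V] [DecidableEq V]
    (E : Finset (V × V)) (hloop : ∀ i : V, (i, i) ∉ E) :
    ∀ i j : V, i ≠ j →
      (genT E j i ≠ 0 ↔ Relation.TransGen (fun a b : V => (a, b) ∈ E) i j) :=
  stmt_3_general E
end

section
/- Let C̄, R̄ ⊆ V with |C̄| = |R̄|. Suppose there exists a bijection σ : C̄ → R̄ such that 𝕋 c (σ c) ≠ 0 for every c ∈ C̄ (i.e., the submatrix 𝕋_{C̄,R̄} has full structural rank |C̄|), while the rank of the submatrix of 𝕋 with rows C̄ and columns R̄ is strictly less than |C̄|. Then the family of nonzero entries of this submatrix, namely (𝕋 c r) indexed by the pairs (c,r) ∈ C̄ × R̄ with 𝕋 c r ≠ 0, is not algebraically independent over ℝ. -/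
open Matrix

/-- If the submatrix `𝕋_{C̄,R̄}` has full structural rank `|C̄| = |R̄|` (witnessed by a
bijection `σ` with `𝕋 c (σ c) ≠ 0` for all `c ∈ C̄`) but its rank is strictly less than
`|C̄|`, then the nonzero entries of this submatrix are algebraically dependent over `ℝ`. -/
theorem stmt_5 {V : Type*} [Fintype V] [DecidableEq V]
    (E : Finset (V × V)) (hloop : ∀ i : V, (i, i) ∉ E)
    (Cb Rb : Finset V) (hcard : Cb.card = Rb.card)
    (σ : {c : V // c ∈ Cb} ≃ {r : V // r ∈ Rb})
    (hσ : ∀ c : {c : V // c ∈ Cb}, genT E c.1 (σ c).1 ≠ 0)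
    (hrank : (Matrix.of fun (c : {c : V // c ∈ Cb}) (r : {r : V // r ∈ Rb}) =>
        genT E c.1 r.1).rank < Cb.card) :
    ¬ AlgebraicIndependent ℝ
        (fun p : {p : {c : V // c ∈ Cb} × {r : V // r ∈ Rb} // genT E p.1.1 p.2.1 ≠ 0} =>
          genT E p.1.1.1 p.1.2.1) := by
  classical
  intro hAI
  -- `f` is the family of nonzero entries
  set f : {p : {c : V // c ∈ Cb} × {r : V // r ∈ Rb} // genT E p.1.1 p.2.1 ≠ 0} →
      FractionRing (MvPolynomial {e : V × V // e ∈ E} ℝ) :=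
    (fun p => genT E p.1.1.1 p.1.2.1) with hf
  -- the generic matrix of variables
  set N : Matrix {c : V // c ∈ Cb} {c : V // c ∈ Cb}
      (MvPolynomial {p : {c : V // c ∈ Cb} × {r : V // r ∈ Rb} // genT E p.1.1 p.2.1 ≠ 0} ℝ) :=
    Matrix.of (fun c c' =>
      if h : genT E c.1 (σ c').1 ≠ 0 then MvPolynomial.X ⟨(c, σ c'), h⟩ else 0) with hN
  -- mapping N through aeval f gives the actual submatrix (recolumned by σ)
  have h1 : N.map (MvPolynomial.aeval f) =
      Matrix.of (fun c c' : {c : V // c ∈ Cb} => genT E c.1 (σ c').1) := by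
    ext c c'
    simp only [Matrix.map_apply, hN, Matrix.of_apply]
    split_ifs with h
    · simp [hf]
    · push_neg at h
      simp [h]
  -- the recolumned submatrix equals the original submatrix times a selection matrix
  have hfac : Matrix.of (fun c c' : {c : V // c ∈ Cb} => genT E c.1 (σ c').1) =
      (Matrix.of fun (c : {c : V // c ∈ Cb}) (r : {r : V // r ∈ Rb}) => genT E c.1 r.1) *
        (Matrix.of fun (r : {r : V // r ∈ Rb}) (c : {c : V // c ∈ Cb}) =>
          if r = σ c then (1 : FractionRing (MvPolynomial {e : V × V // e ∈ E} ℝ)) else 0) := by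
    ext c c'
    simp [Matrix.mul_apply, mul_ite]
  -- the determinant of the recolumned submatrix is zero
  have hdetM : (Matrix.of (fun c c' : {c : V // c ∈ Cb} => genT E c.1 (σ c').1)).det = 0 := by
    by_contra hd
    have hu : IsUnit (Matrix.of (fun c c' : {c : V // c ∈ Cb} => genT E c.1 (σ c').1)) :=
      (Matrix.isUnit_iff_isUnit_det _).2 (isUnit_iff_ne_zero.2 hd)
    have hrk := Matrix.rank_of_isUnit _ hu
    have hle := Matrix.rank_mul_le_left
      (Matrix.of fun (c : {c : V // c ∈ Cb}) (r : {r : V // r ∈ Rb}) => genT E c.1 r.1)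
      (Matrix.of fun (r : {r : V // r ∈ Rb}) (c : {c : V // c ∈ Cb}) =>
        if r = σ c then (1 : FractionRing (MvPolynomial {e : V × V // e ∈ E} ℝ)) else 0)
    rw [← hfac, hrk, Fintype.card_coe] at hle
    exact absurd (lt_of_le_of_lt hle hrank) (lt_irrefl _)
  -- hence det N = 0 by algebraic independence
  have hN0 : N.det = 0 := by
    apply hAI
    show MvPolynomial.aeval f N.det = MvPolynomial.aeval f 0
    rw [map_zero, AlgHom.map_det,
      show (MvPolynomial.aeval f).mapMatrix N = N.map (MvPolynomial.aeval f) from rfl, h1, hdetM]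
  -- but evaluating at a 0/1 point gives det = 1
  set g : {p : {c : V // c ∈ Cb} × {r : V // r ∈ Rb} // genT E p.1.1 p.2.1 ≠ 0} → ℝ :=
    fun v => if v.1.2 = σ v.1.1 then 1 else 0 with hg
  have h2 : N.map (MvPolynomial.aeval g) = 1 := by
    ext c c'
    simp only [Matrix.map_apply, hN, Matrix.of_apply, Matrix.one_apply]
    split_ifs with h hcc hcc
    · simp only [MvPolynomial.aeval_X, hg]
      subst hcc; simp
    · simp only [MvPolynomial.aeval_X, hg]
      have : ¬ ((σ c') = σ c) := fun hh => hcc (σ.injective hh).symm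
      simp [this]
    · exact absurd (hcc ▸ hσ c) h
    · simp
  have h3 := congrArg Matrix.det h2
  have h4 : (N.map (MvPolynomial.aeval g)).det = 0 := by
    rw [show N.map (MvPolynomial.aeval g) = (MvPolynomial.aeval g).mapMatrix N from rfl,
      ← AlgHom.map_det, hN0, map_zero]
  rw [Matrix.det_one, h4] at h3
  norm_num at h3
end

section
/- If the model set M(E) is identifiable from (R, C), then the number of pairs (c,r) ∈ C × R for which the generic entry 𝕋 c r is neither 0 nor 1 is at least |E|. -/
/-!
Specialising the generic network at a real parameter `x ∈ ℝ^E` with nonzero entries and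
`det (I - G(x)) ≠ 0` gives a member of `M(E)` whose response is `𝕋` evaluated at `x`. An entry with
`𝕋 c r ∈ {0, 1}` takes the same value at every such `x`, so identifiability makes
`x ↦ (𝕋 c r (x))` over the remaining pairs `(c, r) ∈ C × R` injective on a nonempty open subset
of `ℝ^E`. This map is `C¹`, and a `C¹` map injective on an open set cannot lower dimension.
-/

open Matrix

open Set Filter Topology Module MvPolynomial

theorem ContDiffAt.exists_levelSet_parametrization {E : Type*} [NormedAddCommGroup E]
    [NormedSpace ℝ E] [FiniteDimensional ℝ E] {h : E → ℝ} {x₀ : E}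
    (hh : ContDiffAt ℝ 1 h x₀) (hL : fderiv ℝ h x₀ ≠ 0) :
    ∃ K : Submodule ℝ E, finrank ℝ K + 1 = finrank ℝ E ∧
      ∃ φ : K → E, φ 0 = x₀ ∧ Function.Injective φ ∧
        ∀ᶠ v in 𝓝 0, ContDiffAt ℝ 1 φ v ∧ h (φ v) = h x₀ := by
  set L := fderiv ℝ h x₀
  obtain ⟨w₀, hw₀⟩ := ContinuousLinearMap.exists_ne_zero hL
  set w := (L w₀)⁻¹ • w₀
  have hw : L w = 1 := by simp [w, hw₀]
  set K := LinearMap.ker (L : E →ₗ[ℝ] ℝ)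
  have hK : finrank ℝ K + 1 = finrank ℝ E := by
    have hsurj : LinearMap.range (L : E →ₗ[ℝ] ℝ) = ⊤ :=
      LinearMap.range_eq_top.2 fun t => ⟨t • w, by simp [hw]⟩
    have := LinearMap.finrank_range_add_finrank_ker (L : E →ₗ[ℝ] ℝ)
    rw [hsurj, finrank_top, finrank_self] at this
    exact (add_comm _ _).trans this
  -- Since `L w = 1`, the implicit function theorem solves `h (x₀ + v + t • w) = h x₀` for `t`.
  set A : K × ℝ →L[ℝ] E :=
    K.subtypeL.comp (.fst ℝ K ℝ) + (ContinuousLinearMap.snd ℝ K ℝ).smulRight w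
  have hA : ∀ p, A p = p.1 + p.2 • w := fun p => rfl
  set F : K × ℝ → ℝ := fun p => h (x₀ + A p)
  have hF : ContDiffAt ℝ 1 F 0 := by
    refine ContDiffAt.comp (f := fun p => x₀ + A p) (0 : K × ℝ) ?_ ?_
    · simpa using hh
    · fun_prop
  have hF' : fderiv ℝ F 0 ∘L .inr ℝ K ℝ = .id ℝ ℝ := by
    have hd : HasFDerivAt F (L ∘L A) 0 := by
      refine HasFDerivAt.comp (g := h) (f := fun p => x₀ + A p) (0 : K × ℝ) ?_ ?_
      · simpa using (hh.differentiableAt one_ne_zero).hasFDerivAt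
      · exact (A.hasFDerivAt).const_add x₀
    ext
    simp [hd.fderiv, hA, hw]
  have hinv : (fderiv ℝ F 0 ∘L .inr ℝ K ℝ).IsInvertible := hF' ▸ ⟨.refl ℝ ℝ, rfl⟩
  set ψ := hF.implicitFunction one_ne_zero hinv
  refine ⟨K, hK, fun v => x₀ + A (v, ψ v), ?_, ?_, ?_⟩
  · have hψ0 : ψ 0 = 0 := hF.implicitFunction_apply_self one_ne_zero hinv
    simp [hA, hψ0]
  · intro v v' hvv'
    have hLv : ∀ v : K, L v = 0 := fun v => v.2
    have hψ : ψ v = ψ v' := by simpa [hA, hLv, hw] using congrArg L hvv'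
    simpa [hA, hψ] using hvv'
  · filter_upwards [(hF.contDiffAt_implicitFunction one_ne_zero hinv).eventually (by simp),
      hF.eventually_apply_implicitFunction one_ne_zero hinv] with v hψv hFv
    refine ⟨by fun_prop, ?_⟩
    simpa [F] using hFv

theorem finrank_le_of_injOn_of_contDiffAt_fin (k : ℕ) {E : Type*} [NormedAddCommGroup E]
    [NormedSpace ℝ E] [FiniteDimensional ℝ E] {f : E → Fin k → ℝ} {s : Set E} {x₀ : E}
    (hs : s ∈ 𝓝 x₀) (hf : ∀ x ∈ s, ContDiffAt ℝ 1 f x) (hinj : InjOn f s) : finrank ℝ E ≤ k := by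
  induction k generalizing E with
  | zero =>
    by_contra! hpos
    have : Nontrivial E := Module.nontrivial_of_finrank_pos hpos
    exact infinite_of_mem_nhds x₀ hs
      (Set.Subsingleton.finite fun x hx y hy => hinj hx hy (Subsingleton.elim _ _))
  | succ k ih =>
    set f₀ : E → ℝ := fun x => f x 0
    set g : E → Fin k → ℝ := fun x => Fin.tail (f x)
    have hf₀ : ∀ x ∈ s, ContDiffAt ℝ 1 f₀ x := fun x hx => contDiffAt_pi.1 (hf x hx) 0
    have hg : ∀ x ∈ s, ContDiffAt ℝ 1 g x := fun x hx =>
      contDiffAt_pi.2 fun j => contDiffAt_pi.1 (hf x hx) j.succ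
    have hinj_g : ∀ t ⊆ s, ∀ c, (∀ x ∈ t, f₀ x = c) → InjOn g t := by
      intro t hts c hc x hx y hy hgxy
      refine hinj (hts hx) (hts hy) ?_
      rw [← Fin.cons_self_tail (f x), ← Fin.cons_self_tail (f y)]
      exact congrArg₂ _ ((hc x hx).trans (hc y hy).symm) hgxy
    -- Either `f₀` is locally constant, or `g` is injective on a level set of `f₀` through a
    -- regular point, which has one dimension less.
    by_cases hcrit : ∀ x ∈ interior s, fderiv ℝ f₀ x = 0
    · obtain ⟨ε, hε, hball⟩ := Metric.mem_nhds_iff.1 hs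
      have hball_int : Metric.ball x₀ ε ⊆ interior s := interior_maximal hball Metric.isOpen_ball
      have hconst : ∀ x ∈ Metric.ball x₀ ε, f₀ x = f₀ x₀ :=
        fun x hx => Metric.isOpen_ball.is_const_of_fderiv_eq_zero
          (convex_ball x₀ ε).isPreconnected
          (fun z hz => ((hf₀ z (hball hz)).differentiableAt one_ne_zero).differentiableWithinAt)
          (fun z hz => hcrit z (hball_int hz)) hx (Metric.mem_ball_self hε)
      have := ih (Metric.ball_mem_nhds x₀ hε) (fun x hx => hg x (hball hx))
        (hinj_g _ hball _ hconst)
      omega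
    · push Not at hcrit
      obtain ⟨x₁, hx₁, hL⟩ := hcrit
      obtain ⟨K, hK, φ, hφ0, hφinj, hφ⟩ :=
        (hf₀ x₁ (interior_subset hx₁)).exists_levelSet_parametrization hL
      have hφs : ∀ᶠ v in 𝓝 0, φ v ∈ s :=
        hφ.self_of_nhds.1.continuousAt.preimage_mem_nhds (hφ0 ▸ mem_interior_iff_mem_nhds.1 hx₁)
      set U := {v | (ContDiffAt ℝ 1 φ v ∧ f₀ (φ v) = f₀ x₁) ∧ φ v ∈ s}
      have hinjU : InjOn (g ∘ φ) U :=
        (hinj_g (φ '' U) (image_subset_iff.2 fun v hv => hv.2) _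
          (forall_mem_image.2 fun v hv => hv.1.2)).comp hφinj.injOn (mapsTo_image φ U)
      have := ih (f := g ∘ φ) (hφ.and hφs) (fun v hv => (hg _ hv.2).comp v hv.1.1) hinjU
      omega

theorem finrank_le_of_injOn_of_contDiffAt {E F : Type*} [NormedAddCommGroup E] [NormedSpace ℝ E]
    [FiniteDimensional ℝ E] [NormedAddCommGroup F] [NormedSpace ℝ F] [FiniteDimensional ℝ F]
    {f : E → F} {s : Set E} {x₀ : E} (hs : s ∈ 𝓝 x₀)
    (hf : ∀ x ∈ s, ContDiffAt ℝ 1 f x) (hinj : InjOn f s) : finrank ℝ E ≤ finrank ℝ F := by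
  let e : F ≃L[ℝ] (Fin (finrank ℝ F) → ℝ) :=
    ContinuousLinearEquiv.ofFinrankEq (finrank_fin_fun ℝ).symm
  exact finrank_le_of_injOn_of_contDiffAt_fin _ (f := e ∘ f) hs
    (fun x hx => e.contDiff.contDiffAt.comp x (hf x hx)) (e.injective.comp_injOn hinj)

theorem MvPolynomial.contDiff_eval {𝕜 σ : Type*} [NontriviallyNormedField 𝕜] [Fintype σ]
    {n : WithTop ℕ∞} (p : MvPolynomial σ 𝕜) : ContDiff 𝕜 n fun x : σ → 𝕜 => eval x p := by
  induction p using MvPolynomial.induction_on with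
  | C a => simpa using contDiff_const
  | add p q hp hq => simpa using hp.add hq
  | mul_X p i hp => simpa using hp.mul (contDiff_apply 𝕜 𝕜 i)

theorem Matrix.inv_map_apply {A K n : Type*} [CommRing A] [Field K] [Fintype n] [DecidableEq n]
    (φ : A →+* K) (M : Matrix n n A) (i j : n) :
    (φ.mapMatrix M)⁻¹ i j = φ (M.adjugate i j) / φ M.det := by
  rw [inv_def, smul_apply, smul_eq_mul, Ring.inverse_eq_inv', ← RingHom.map_det,
    ← RingHom.map_adjugate, div_eq_inv_mul]
  rfl

namespace Network

variable {V : Type*} [Fintype V] [DecidableEq V] (E : Finset (V × V))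

noncomputable def polyG : Matrix V V (MvPolynomial E ℝ) :=
  Matrix.of fun j i => if h : (i, j) ∈ E then X ⟨(i, j), h⟩ else 0

theorem mapMatrix_polyG_apply {S : Type*} [CommRing S] (φ : MvPolynomial E ℝ →+* S) (i j : V) :
    φ.mapMatrix (polyG E) j i = if h : (i, j) ∈ E then φ (X ⟨(i, j), h⟩) else 0 := by
  simp [polyG, apply_dite φ]

theorem genG_eq_mapMatrix :
    genG E = (algebraMap _ _ : MvPolynomial E ℝ →+* _).mapMatrix (polyG E) := by
  ext j i
  rw [mapMatrix_polyG_apply]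
  rfl

theorem constantCoeff_det_one_sub_polyG : constantCoeff (1 - polyG E).det = 1 := by
  have : constantCoeff.mapMatrix (polyG E) = 0 := by
    ext j i
    rw [mapMatrix_polyG_apply]
    split <;> simp
  rw [RingHom.map_det, map_sub, map_one, this, sub_zero, det_one]

theorem det_one_sub_polyG_ne_zero : (1 - polyG E).det ≠ 0 := fun h => by
  simpa [h] using constantCoeff_det_one_sub_polyG E

theorem genT_apply (c r : V) :
    genT E c r = algebraMap _ _ ((1 - polyG E).adjugate c r) /
      algebraMap _ (FractionRing (MvPolynomial E ℝ)) (1 - polyG E).det := by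
  rw [genT, genG_eq_mapMatrix, ← map_one (algebraMap _ _ : MvPolynomial E ℝ →+* _).mapMatrix,
    ← map_sub, inv_map_apply]

theorem genT_eq_zero_iff (c r : V) : genT E c r = 0 ↔ (1 - polyG E).adjugate c r = 0 := by
  simp [genT_apply, det_one_sub_polyG_ne_zero]

theorem genT_eq_one_iff (c r : V) :
    genT E c r = 1 ↔ (1 - polyG E).adjugate c r = (1 - polyG E).det := by
  simp [genT_apply, div_eq_one_iff_eq, det_one_sub_polyG_ne_zero]

variable {E}

noncomputable def evalG (x : E → ℝ) : Matrix V V (RatFunc ℝ) :=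
  ((algebraMap ℝ (RatFunc ℝ)).comp (eval x)).mapMatrix (polyG E)

noncomputable def evalT (x : E → ℝ) (c r : V) : ℝ :=
  eval x ((1 - polyG E).adjugate c r) / eval x (1 - polyG E).det

def regularParams (E : Finset (V × V)) : Set (E → ℝ) :=
  {x | (∀ e, x e ≠ 0) ∧ eval x (1 - polyG E).det ≠ 0}

theorem netT_evalG_apply (x : E → ℝ) (c r : V) :
    netT (evalG x) c r = algebraMap ℝ (RatFunc ℝ) (evalT x c r) := by
  rw [netT, evalG, ← map_one ((algebraMap ℝ (RatFunc ℝ)).comp (eval x)).mapMatrix, ← map_sub,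
    inv_map_apply, evalT, map_div₀]
  rfl

theorem evalG_injective : Function.Injective (evalG (E := E)) := by
  intro x y h
  funext ⟨(i, j), hij⟩
  have := congrFun₂ h j i
  simp only [evalG, mapMatrix_polyG_apply, dif_pos hij, RingHom.comp_apply, eval_X] at this
  exact (algebraMap ℝ (RatFunc ℝ)).injective this

theorem evalG_mem_modelSet {x : E → ℝ} (hx : x ∈ regularParams E) : evalG x ∈ ModelSet E := by
  refine ⟨fun i j => ?_, ?_⟩
  · rw [evalG, mapMatrix_polyG_apply]
    by_cases hij : (i, j) ∈ E <;> simp [hij, hx.1]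
  · rw [isUnit_iff_isUnit_det, isUnit_iff_ne_zero, evalG,
      ← map_one ((algebraMap ℝ (RatFunc ℝ)).comp (eval x)).mapMatrix, ← map_sub, ← RingHom.map_det]
    simpa using hx.2

theorem isOpen_regularParams : IsOpen (regularParams E) := by
  simp only [regularParams, ofPred_and, ofPred_forall]
  exact (isOpen_iInter_of_finite fun e => isOpen_ne_fun (continuous_apply e) continuous_const).inter
    (isOpen_ne_fun (continuous_eval _) continuous_const)

theorem regularParams_nonempty : (regularParams E).Nonempty := by
  have hdet : ∀ᶠ t in 𝓝 (0 : ℝ), eval (fun _ => t) (1 - polyG E).det ≠ 0 :=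
    (continuous_eval _).comp (continuous_pi fun _ => continuous_id) |>.continuousAt.eventually_ne
      (by simp [← Pi.zero_def, constantCoeff_det_one_sub_polyG])
  obtain ⟨t, ht, htpos⟩ :=
    ((hdet.filter_mono nhdsWithin_le_nhds).and (self_mem_nhdsWithin (s := Ioi 0))).exists
  exact ⟨fun _ => t, fun _ => ne_of_gt htpos, ht⟩

theorem contDiffAt_evalT {x : E → ℝ} (hx : eval x (1 - polyG E).det ≠ 0) (c r : V) :
    ContDiffAt ℝ 1 (fun y => evalT y c r) x :=
  (contDiff_eval _).contDiffAt.div (contDiff_eval _).contDiffAt hx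

theorem evalT_of_genT_eq_zero {c r : V} (h : genT E c r = 0) (x : E → ℝ) : evalT x c r = 0 := by
  simp [evalT, (genT_eq_zero_iff E c r).1 h]

theorem evalT_of_genT_eq_one {c r : V} (h : genT E c r = 1) {x : E → ℝ}
    (hx : eval x (1 - polyG E).det ≠ 0) : evalT x c r = 1 := by
  rw [evalT, (genT_eq_one_iff E c r).1 h, div_self hx]

def informativePairs (E : Finset (V × V)) (R C : Finset V) : Set (V × V) :=
  {p | p.1 ∈ C ∧ p.2 ∈ R ∧ genT E p.1 p.2 ≠ 0 ∧ genT E p.1 p.2 ≠ 1}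

theorem _root_.Identifiable.injOn_evalT {R C : Finset V} (hid : Identifiable E R C) :
    InjOn (fun x (p : informativePairs E R C) => evalT x p.1.1 p.1.2) (regularParams E) := by
  intro x hx y hy hxy
  refine evalG_injective (hid _ (evalG_mem_modelSet hy) _ (evalG_mem_modelSet hx) ?_)
  intro c hc r hr
  rw [netT_evalG_apply, netT_evalG_apply]
  congr 1
  by_cases h0 : genT E c r = 0
  · rw [evalT_of_genT_eq_zero h0, evalT_of_genT_eq_zero h0]
  by_cases h1 : genT E c r = 1
  · rw [evalT_of_genT_eq_one h1 hx.2, evalT_of_genT_eq_one h1 hy.2]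
  exact congrFun hxy ⟨(c, r), hc, hr, h0, h1⟩

end Network

theorem stmt_6_general {V : Type*} [Fintype V] [DecidableEq V]
    (E : Finset (V × V))
    (R C : Finset V)
    (hid : Identifiable E R C) :
    E.card ≤
      {p : V × V | p.1 ∈ C ∧ p.2 ∈ R ∧ genT E p.1 p.2 ≠ 0 ∧ genT E p.1 p.2 ≠ 1}.ncard := by
  classical
  obtain ⟨x₀, hx₀⟩ := Network.regularParams_nonempty (E := E)
  have h := finrank_le_of_injOn_of_contDiffAt
    (f := fun x (p : Network.informativePairs E R C) => Network.evalT x p.1.1 p.1.2)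
    (Network.isOpen_regularParams.mem_nhds hx₀)
    (fun x hx => contDiffAt_pi.2 fun p => Network.contDiffAt_evalT hx.2 _ _) hid.injOn_evalT
  rwa [finrank_fintype_fun_eq_card, finrank_fintype_fun_eq_card, Fintype.card_coe,
    ← Nat.card_eq_fintype_card, Nat.card_coe_set_eq] at h

/-- If `M(E)` is identifiable from `(R, C)`, then the number of pairs `(c,r) ∈ C × R` whose
generic entry `𝕋 c r` is neither `0` nor `1` is at least the number of edges `|E|`. -/
theorem stmt_6 {V : Type*} [Fintype V] [DecidableEq V]
    (E : Finset (V × V)) (hloop : ∀ i : V, (i, i) ∉ E)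
    (R C : Finset V)
    (hid : Identifiable E R C) :
    E.card ≤
      {p : V × V | p.1 ∈ C ∧ p.2 ∈ R ∧ genT E p.1 p.2 ≠ 0 ∧ genT E p.1 p.2 ≠ 1}.ncard :=
  stmt_6_general E R C hid
end

section
/- Let A and B be finite sets and S ⊆ A × B. Let K be the fraction field of the multivariate polynomial ring ℝ[X s : s ∈ S], and let M : Matrix A B K be the matrix with M a b = X (a,b) if (a,b) ∈ S and M a b = 0 otherwise. Then the rank of M equals the maximum cardinality of a matching in S, i.e., of a subset of S whose elements have pairwise distinct first coordinates and pairwise distinct second coordinates. -/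
/-!
A matrix of rank `r` over a field has a nonsingular `r × r` submatrix, and expanding its
determinant yields a permutation whose diagonal entries are all nonzero: these `r` entries form
a matching inside the support. Conversely, for a matching `Mt ⊆ S` the square submatrix of the
generic matrix on the rows and columns of `Mt` has a polynomial determinant that specializes to
`det 1 = 1` at the indicator function of `Mt`, so it is a nonzero minor of size `|Mt|`.
-/

open Matrix Function Finset

namespace Finset

variable {α β : Type*}

def IsMatching (Mt : Finset (α × β)) : Prop :=
  ∀ p ∈ Mt, ∀ q ∈ Mt, p ≠ q → p.1 ≠ q.1 ∧ p.2 ≠ q.2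

namespace IsMatching

variable {Mt : Finset (α × β)}

theorem eq_of_mk_mem (h : Mt.IsMatching) {p q : α × β} (hp : p ∈ Mt) (hq : q ∈ Mt)
    (hpq : (p.1, q.2) ∈ Mt) : p = q := by
  have hp' : (p.1, q.2) = p := by_contra fun hne => (h _ hpq _ hp hne).1 rfl
  have hq' : (p.1, q.2) = q := by_contra fun hne => (h _ hpq _ hq hne).2 rfl
  exact hp'.symm.trans hq'

end IsMatching

theorem isMatching_image_of_injective {ι : Type*} [Fintype ι] [DecidableEq α] [DecidableEq β]
    {f : ι → α} {g : ι → β} (hf : Injective f) (hg : Injective g) :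
    (univ.image fun i => (f i, g i)).IsMatching := by
  simp only [IsMatching, mem_image, mem_univ, true_and, forall_exists_index,
    forall_apply_eq_imp_iff]
  intro i j hij
  have hij : i ≠ j := fun h => hij (h ▸ rfl)
  exact ⟨hf.ne hij, hg.ne hij⟩

end Finset

namespace Matrix

section Field

variable {K m n : Type*} [Field K] [Fintype n]

theorem exists_injective_linearIndependent_col (M : Matrix m n K) :
    ∃ g : Fin M.rank → n, Injective g ∧ LinearIndependent K (M.col ∘ g) := by
  obtain ⟨κ, a, ha, hspan, hli⟩ := exists_linearIndependent' K M.col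
  have : Fintype κ := Fintype.ofInjective a ha
  have hcard : Fintype.card κ = M.rank := by
    rw [rank_eq_finrank_span_cols, ← hspan, finrank_span_eq_card hli]
  let e := (Fintype.equivFinOfCardEq hcard).symm
  exact ⟨a ∘ e, ha.comp e.injective, hli.comp e e.injective⟩

theorem exists_det_submatrix_ne_zero [Fintype m] (M : Matrix m n K) :
    ∃ (f : Fin M.rank → m) (g : Fin M.rank → n), Injective f ∧ Injective g ∧
      (M.submatrix f g).det ≠ 0 := by
  obtain ⟨g, hg, hcols⟩ := M.exists_injective_linearIndependent_col
  set N := M.submatrix id g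
  have hN : Nᵀ.rank = M.rank := by
    simpa using LinearIndependent.rank_matrix (M := Nᵀ) hcols
  obtain ⟨f, hf, hrows⟩ := Nᵀ.exists_injective_linearIndependent_col
  generalize Nᵀ.rank = r at f hf hrows hN
  subst hN
  have hunit : IsUnit (M.submatrix f g) := linearIndependent_rows_iff_isUnit.mp hrows
  exact ⟨f, g, hf, hg, ((isUnit_iff_isUnit_det _).mp hunit).ne_zero⟩

end Field

theorem exists_perm_apply_ne_zero_of_det_ne_zero {R n : Type*} [CommRing R] [Fintype n]
    [DecidableEq n] {Q : Matrix n n R} (h : Q.det ≠ 0) :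
    ∃ σ : Equiv.Perm n, ∀ i, Q (σ i) i ≠ 0 := by
  rw [det_apply'] at h
  obtain ⟨σ, -, hσ⟩ := exists_ne_zero_of_sum_ne_zero h
  refine ⟨σ, fun i hi => hσ ?_⟩
  rw [prod_eq_zero (f := fun j => Q (σ j) j) (mem_univ i) hi, mul_zero]

theorem exists_isMatching_card_eq_rank {K m n : Type*} [Field K] [Fintype m] [Fintype n]
    [DecidableEq m] [DecidableEq n] (M : Matrix m n K) :
    ∃ Mt : Finset (m × n), (∀ p ∈ Mt, M p.1 p.2 ≠ 0) ∧ Mt.card = M.rank ∧ Mt.IsMatching := by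
  obtain ⟨f, g, hf, hg, hdet⟩ := M.exists_det_submatrix_ne_zero
  obtain ⟨σ, hσ⟩ := exists_perm_apply_ne_zero_of_det_ne_zero hdet
  have hfσ : Injective (f ∘ σ) := hf.comp σ.injective
  refine ⟨univ.image fun i => (f (σ i), g i), ?_, ?_, isMatching_image_of_injective hfσ hg⟩
  · simpa using hσ
  · rw [card_image_of_injective _ fun i j hij => hfσ (congrArg Prod.fst hij), card_univ,
      Fintype.card_fin]

theorem card_le_rank_of_det_submatrix_ne_zero {R m n ι : Type*} [CommRing R] [IsDomain R]
    [Fintype n] [Fintype ι] [DecidableEq ι] (M : Matrix m n R) {f : ι → m} {g : ι → n}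
    (h : (M.submatrix f g).det ≠ 0) : Fintype.card ι ≤ M.rank :=
  (rank_of_det_ne_zero h).symm.trans_le (M.rank_submatrix_le f g)

end Matrix

section Generic

open MvPolynomial

variable {A B : Type*} [DecidableEq A] [DecidableEq B]

noncomputable def genericMatrix (R : Type*) [CommSemiring R] (S : Finset (A × B)) :
    Matrix A B (MvPolynomial S R) :=
  of fun a b => if h : (a, b) ∈ S then X ⟨(a, b), h⟩ else 0

theorem det_submatrix_genericMatrix_ne_zero {R : Type*} [CommRing R] [Nontrivial R]
    {S Mt : Finset (A × B)} (hMt : Mt.IsMatching) (hS : Mt ⊆ S) :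
    ((genericMatrix R S).submatrix (fun p : Mt => p.1.1) (fun p : Mt => p.1.2)).det ≠ 0 := by
  set indicator : S → R := fun s => if s.1 ∈ Mt then 1 else 0
  have hspec : ((genericMatrix R S).submatrix (fun p : Mt => p.1.1)
      (fun p : Mt => p.1.2)).map (MvPolynomial.eval indicator) = 1 := by
    ext p q
    by_cases hpq : p = q
    · subst hpq
      simp [genericMatrix, hS p.2, indicator]
    · have hnot : (p.1.1, q.1.2) ∉ Mt := fun h =>
        hpq (Subtype.ext (hMt.eq_of_mk_mem p.2 q.2 h))
      by_cases hpqS : (p.1.1, q.1.2) ∈ S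
      · simp [genericMatrix, indicator, hpq, hpqS, hnot]
      · simp [genericMatrix, hpq, hpqS]
  intro h
  have h1 := congrArg (MvPolynomial.eval indicator) h
  rw [RingHom.map_det, RingHom.mapMatrix_apply, hspec, det_one, map_zero] at h1
  exact one_ne_zero h1

theorem card_le_rank_map_genericMatrix {R K : Type*} [CommRing R] [Nontrivial R] [Field K]
    [Fintype B] {S Mt : Finset (A × B)} (φ : MvPolynomial S R →+* K) (hφ : Injective φ)
    (hMt : Mt.IsMatching) (hS : Mt ⊆ S) : Mt.card ≤ ((genericMatrix R S).map φ).rank := by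
  rw [← Fintype.card_coe]
  refine card_le_rank_of_det_submatrix_ne_zero _
    (f := fun p : Mt => p.1.1) (g := fun p => p.1.2) ?_
  rw [submatrix_map, ← RingHom.mapMatrix_apply, ← RingHom.map_det]
  exact (map_ne_zero_iff φ hφ).mpr (det_submatrix_genericMatrix_ne_zero hMt hS)

end Generic

/-- The rank of the generic matrix with sparsity pattern `S ⊆ A × B` (entry `(a,b)` is the
indeterminate `X (a,b)` if `(a,b) ∈ S`, and `0` otherwise) over the fraction field of
`ℝ[Xₛ : s ∈ S]` equals the maximum cardinality of a matching in `S`, i.e. of a subset of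
`S` whose elements have pairwise distinct first coordinates and pairwise distinct second
coordinates. -/
theorem stmt_10 {A B : Type*} [Fintype A] [Fintype B] [DecidableEq A] [DecidableEq B]
    (S : Finset (A × B))
    (M : Matrix A B (FractionRing (MvPolynomial {s : A × B // s ∈ S} ℝ)))
    (hM : M = Matrix.of fun a b =>
      if h : (a, b) ∈ S then
        algebraMap (MvPolynomial {s : A × B // s ∈ S} ℝ) _ (MvPolynomial.X ⟨(a, b), h⟩)
      else 0) :
    M.rank = sSup {n : ℕ | ∃ Mt : Finset (A × B), Mt ⊆ S ∧ Mt.card = n ∧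
      ∀ p ∈ Mt, ∀ q ∈ Mt, p ≠ q → p.1 ≠ q.1 ∧ p.2 ≠ q.2} := by
  have hbdd : BddAbove {n : ℕ | ∃ Mt : Finset (A × B), Mt ⊆ S ∧ Mt.card = n ∧ Mt.IsMatching} :=
    ⟨S.card, by rintro n ⟨Mt, hS, rfl, -⟩; exact card_le_card hS⟩
  apply le_antisymm
  · obtain ⟨Mt, hsupp, hcard, hMt⟩ := M.exists_isMatching_card_eq_rank
    refine le_csSup hbdd ⟨Mt, fun p hp => ?_, hcard, hMt⟩
    by_contra hpS
    exact hsupp p hp (by rw [hM]; exact dif_neg hpS)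
  · refine csSup_le ⟨0, ∅, empty_subset S, rfl, by simp⟩ ?_
    rintro n ⟨Mt, hS, rfl, hMt⟩
    have hM' : M = (genericMatrix ℝ S).map (algebraMap _ _) := by
      rw [hM]
      ext a b
      simp only [genericMatrix, Matrix.map_apply, Matrix.of_apply]
      split_ifs <;> simp
    rw [hM']
    exact card_le_rank_map_genericMatrix _ (IsFractionRing.injective _ _) hMt hS
end

section
/- For every G ∈ M(E), the rank of the submatrix of T(G) = (I − G)⁻¹ with rows indexed by C and columns indexed by R is at most b(R→C), the maximum number of pairwise vertex-disjoint directed paths from R to C in (V,E). -/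
open Matrix

/-- A directed path in the graph with edge set `E`: a nonempty list of pairwise distinct
vertices in which every pair of consecutive vertices is an edge. A single vertex is a
path of length `0`. -/
def IsDiPath {V : Type*} (E : Finset (V × V)) (l : List V) : Prop :=
  l ≠ [] ∧ l.Nodup ∧ l.Chain' (fun a b => (a, b) ∈ E)

/-- A directed path starting at a vertex of `R` and ending at a vertex of `C`. -/
def IsDiPathFromTo {V : Type*} (E : Finset (V × V)) (R C : Finset V) (l : List V) : Prop :=
  IsDiPath E l ∧ (∃ r ∈ R, l.head? = some r) ∧ (∃ c ∈ C, l.getLast? = some c)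

/-- There exist `n` pairwise vertex-disjoint directed paths from `R` to `C`. -/
def HasDisjointPaths {V : Type*} (E : Finset (V × V)) (R C : Finset V) (n : ℕ) : Prop :=
  ∃ f : Fin n → List V, (∀ k, IsDiPathFromTo E R C (f k)) ∧
    ∀ k l : Fin n, k ≠ l → ∀ v : V, v ∈ f k → v ∉ f l

/-- `b(R→C)`: the maximum number of pairwise vertex-disjoint directed paths from `R`
to `C`. -/
noncomputable def maxDisjointPaths {V : Type*} (E : Finset (V × V)) (R C : Finset V) : ℕ :=
  sSup {n : ℕ | HasDisjointPaths E R C n}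

/-!
Let `m` be the rank of `T_{C,R}` and pick an invertible `m × m` submatrix `T[c, r]` of it. Because
`T (I - G) = I`, the matrix obtained from `I - G` by replacing its row `r j` with the unit row at
`c j` is nonsingular: a kernel vector `x` vanishes at every `c j`, so `(I - G) x` is supported on
the `r j`, and `T[c, r]` then forces `(I - G) x = 0`. A nonvanishing term of its determinant is a
permutation `σ` of `V` with `σ (c j) = r j` and such that, whenever `σ w` is not some `r j`, either
`σ w = w` or `w → σ w` is an edge. Following `σ` from each `r k` until it re-enters `{r j}` traces
a directed path from `r k` to some `c j`; since `σ` is injective, these `m` paths are disjoint.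
-/

open Function

namespace Matrix

variable {F : Type*} [Field F]

theorem exists_linearIndependent_cols_of_rank_eq {α β : Type*} [Fintype α] [Fintype β]
    (M : Matrix α β F) {m : ℕ} (hm : M.rank = m) :
    ∃ g : Fin m → β, LinearIndependent F (M.submatrix id g).col := by
  obtain ⟨κ, a, ha, hspan, hli⟩ := exists_linearIndependent' F M.col
  have : Finite κ := Finite.of_injective a ha
  have : Fintype κ := Fintype.ofFinite κ
  have hcard : Fintype.card κ = m := by
    rw [← hm, rank_eq_finrank_span_cols, ← hspan, finrank_span_eq_card hli]
  let e : Fin m ≃ κ := (Fintype.equivFinOfCardEq hcard).symm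
  exact ⟨a ∘ e, hli.comp e e.injective⟩

theorem exists_isUnit_submatrix_rank {α β : Type*} [Fintype α] [Fintype β] (M : Matrix α β F) :
    ∃ (f : Fin M.rank → α) (g : Fin M.rank → β), Injective f ∧ Injective g ∧
      IsUnit (M.submatrix f g) := by
  obtain ⟨g, hg⟩ := M.exists_linearIndependent_cols_of_rank_eq rfl
  have hrank : (M.submatrix id g)ᵀ.rank = M.rank := by
    simpa using LinearIndependent.rank_matrix (M := (M.submatrix id g)ᵀ) hg
  obtain ⟨f, hf⟩ := (M.submatrix id g)ᵀ.exists_linearIndependent_cols_of_rank_eq hrank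
  refine ⟨f, g, fun i j hij => ?_, fun i j hij => ?_, linearIndependent_rows_iff_isUnit.mp hf⟩
  · exact hf.injective (by ext; simp [hij])
  · exact hg.injective (by ext; simp [hij])

theorem exists_perm_forall_ne_zero_of_det_ne_zero {n R : Type*} [Fintype n] [DecidableEq n]
    [CommRing R] {M : Matrix n n R} (h : M.det ≠ 0) : ∃ σ : Equiv.Perm n, ∀ i, M (σ i) i ≠ 0 := by
  by_contra! hM
  refine h (M.det_apply ▸ Finset.sum_eq_zero fun σ _ => ?_)
  obtain ⟨i, hi⟩ := hM σ
  exact smul_eq_zero_of_right _ (Finset.prod_eq_zero (Finset.mem_univ i) hi)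

variable {V : Type*} {n : ℕ}

open Classical in
/-- Up to sign, the determinant of this matrix is the minor of `A` on the rows outside `r` and the
columns outside `c`. -/
noncomputable def replaceRows (A : Matrix V V F) (r c : Fin n → V) : Matrix V V F :=
  of fun v w => if v ∈ Set.range r then (if ∃ j, r j = v ∧ c j = w then 1 else 0) else A v w

variable {A : Matrix V V F} {r c : Fin n → V}

theorem replaceRows_apply_of_notMem {v : V} (hv : v ∉ Set.range r) (w : V) :
    replaceRows A r c v w = A v w := by
  rw [replaceRows, of_apply, if_neg hv]

variable [DecidableEq V]

theorem replaceRows_apply_row (hr : Injective r) (j : Fin n) (w : V) :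
    replaceRows A r c (r j) w = if c j = w then 1 else 0 := by
  simp [replaceRows, hr.eq_iff]

variable [Fintype V]

theorem replaceRows_mulVec_apply_row (hr : Injective r) (x : V → F) (j : Fin n) :
    (replaceRows A r c *ᵥ x) (r j) = x (c j) := by
  simp [mulVec, dotProduct, replaceRows_apply_row hr]

theorem det_replaceRows_ne_zero {T : Matrix V V F} (hTA : T * A = 1) (hr : Injective r)
    (hT : IsUnit (T.submatrix c r)) : (replaceRows A r c).det ≠ 0 := by
  intro hdet
  obtain ⟨x, hx0, hx⟩ := exists_mulVec_eq_zero_iff.mpr hdet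
  set y := A *ᵥ x
  have hxc (j : Fin n) : x (c j) = 0 := by
    simpa [replaceRows_mulVec_apply_row hr] using congrFun hx (r j)
  have hy (v : V) (hv : v ∉ Set.range r) : y v = 0 :=
    calc y v = (replaceRows A r c *ᵥ x) v :=
          congrArg (· ⬝ᵥ x) (funext (replaceRows_apply_of_notMem (A := A) (c := c) hv)).symm
      _ = 0 := congrFun hx v
  have hxy : x = T *ᵥ y := by rw [mulVec_mulVec, hTA, one_mulVec]
  have hyr : y ∘ r = 0 := by
    refine mulVec_injective_iff_isUnit.mpr hT ?_
    ext i
    rw [mulVec_zero, Pi.zero_apply, ← hxc i, hxy]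
    exact Fintype.sum_of_injective r hr _ _ (fun w hw => by simp [hy w hw]) (fun _ => rfl)
  have hy0 : y = 0 := by
    ext v
    by_cases hv : v ∈ Set.range r
    · obtain ⟨j, rfl⟩ := hv
      exact congrFun hyr j
    · exact hy v hv
  exact hx0 (by rw [hxy, hy0, mulVec_zero])

end Matrix

namespace Equiv.Perm

variable {V : Type*} [Finite V] {n : ℕ}

theorem exists_pow_succ_apply_mem_range (σ : Perm V) (r : Fin n → V) (k : Fin n) :
    ∃ t, (σ ^ (t + 1)) (r k) ∈ Set.range r :=
  ⟨orderOf σ - 1, by rw [Nat.sub_add_cancel (orderOf_pos σ), pow_orderOf_eq_one]; exact ⟨k, rfl⟩⟩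

open Classical in
noncomputable def linkLength (σ : Perm V) (r : Fin n → V) (k : Fin n) : ℕ :=
  Nat.find (σ.exists_pow_succ_apply_mem_range r k)

noncomputable def linkPath (σ : Perm V) (r : Fin n → V) (k : Fin n) : List V :=
  (List.range (σ.linkLength r k + 1)).map fun s => (σ ^ s) (r k)

variable {σ : Perm V} {r : Fin n → V}

theorem pow_succ_linkLength_apply_mem_range (k : Fin n) :
    (σ ^ (σ.linkLength r k + 1)) (r k) ∈ Set.range r := by
  classical
  exact Nat.find_spec (σ.exists_pow_succ_apply_mem_range r k)

theorem pow_apply_notMem_range {k : Fin n} {s : ℕ} (hs₀ : 0 < s) (hs : s ≤ σ.linkLength r k) :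
    (σ ^ s) (r k) ∉ Set.range r := by
  classical
  obtain ⟨t, rfl⟩ := Nat.exists_eq_add_one.mpr hs₀
  exact Nat.find_min (σ.exists_pow_succ_apply_mem_range r k) (m := t) hs

theorem eq_of_pow_apply_eq_of_le (hr : Injective r) {k l : Fin n} {a b : ℕ} (hab : a ≤ b)
    (hb : b ≤ σ.linkLength r l) (h : (σ ^ a) (r k) = (σ ^ b) (r l)) : k = l ∧ a = b := by
  have hk : r k = (σ ^ (b - a)) (r l) := by
    rw [← (σ ^ a).injective.eq_iff, h, ← Perm.mul_apply, ← pow_add, Nat.add_sub_cancel' hab]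
  obtain hab' | hab' := hab.eq_or_lt
  · exact ⟨hr (by simpa [hab'] using hk), hab'⟩
  · exact absurd ⟨k, hk⟩ (pow_apply_notMem_range (by omega) (by omega))

theorem eq_of_pow_apply_eq (hr : Injective r) {k l : Fin n} {a b : ℕ} (ha : a ≤ σ.linkLength r k)
    (hb : b ≤ σ.linkLength r l) (h : (σ ^ a) (r k) = (σ ^ b) (r l)) : k = l ∧ a = b := by
  obtain hab | hba := le_total a b
  · exact eq_of_pow_apply_eq_of_le hr hab hb h
  · obtain ⟨hlk, hba⟩ := eq_of_pow_apply_eq_of_le hr hba ha h.symm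
    exact ⟨hlk.symm, hba.symm⟩

theorem mem_linkPath {k : Fin n} {v : V} :
    v ∈ σ.linkPath r k ↔ ∃ s ≤ σ.linkLength r k, (σ ^ s) (r k) = v := by
  simp [linkPath]

variable {E : Finset (V × V)} {R C : Finset V}

theorem isDiPathFromTo_linkPath (hr : Injective r)
    (hσ : ∀ v, σ v ∉ Set.range r → σ v = v ∨ (v, σ v) ∈ E)
    (hR : ∀ k, r k ∈ R) (hC : ∀ k, σ.symm (r k) ∈ C) (k : Fin n) :
    IsDiPathFromTo E R C (σ.linkPath r k) := by
  refine ⟨⟨by simp [linkPath], ?_, ?_⟩, ⟨r k, hR k, by simp [linkPath, List.range_succ_eq_map]⟩, ?_⟩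
  · refine List.Nodup.map_on (fun a ha b hb h => ?_) List.nodup_range
    simp only [List.mem_range, Nat.lt_succ_iff] at ha hb
    exact (eq_of_pow_apply_eq hr ha hb h).2
  · refine (List.isChain_map _).mpr ((List.isChain_range_succ _ _).mpr fun s hs => ?_)
    have hstep : σ ((σ ^ s) (r k)) = (σ ^ (s + 1)) (r k) := by rw [pow_succ', Perm.mul_apply]
    rw [← hstep]
    refine (hσ _ (hstep ▸ pow_apply_notMem_range s.succ_pos hs)).resolve_left fun hfix => ?_
    rw [hstep] at hfix
    exact absurd (eq_of_pow_apply_eq hr hs.le hs hfix.symm).2 s.succ_ne_self.symm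
  · obtain ⟨j, hj⟩ := pow_succ_linkLength_apply_mem_range (σ := σ) (r := r) k
    refine ⟨σ.symm (r j), hC j, ?_⟩
    have hlast : σ.symm (r j) = (σ ^ σ.linkLength r k) (r k) := by
      rw [hj, pow_succ', Perm.mul_apply, symm_apply_apply]
    simp [linkPath, hlast, List.getLast?_range]

theorem hasDisjointPaths (σ : Perm V) (hr : Injective r)
    (hσ : ∀ v, σ v ∉ Set.range r → σ v = v ∨ (v, σ v) ∈ E)
    (hR : ∀ k, r k ∈ R) (hC : ∀ k, σ.symm (r k) ∈ C) : HasDisjointPaths E R C n := by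
  refine ⟨σ.linkPath r, isDiPathFromTo_linkPath hr hσ hR hC, fun k l hkl v hvk hvl => ?_⟩
  obtain ⟨a, ha, rfl⟩ := mem_linkPath.mp hvk
  obtain ⟨b, hb, hab⟩ := mem_linkPath.mp hvl
  exact hkl (eq_of_pow_apply_eq hr ha hb hab.symm).1

end Equiv.Perm

section DisjointPaths

variable {V : Type*} [Fintype V] {E : Finset (V × V)} {R C : Finset V} {n : ℕ}

theorem HasDisjointPaths.le_card (h : HasDisjointPaths E R C n) : n ≤ Fintype.card V := by
  obtain ⟨f, hf, hdisj⟩ := h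
  have hne (k : Fin n) : f k ≠ [] := (hf k).1.1
  have hinj : Injective fun k => (f k).head (hne k) := by
    intro k l (hkl : (f k).head (hne k) = (f l).head (hne l))
    by_contra hkl'
    exact hdisj k l hkl' _ (List.head_mem (hne k)) (hkl ▸ List.head_mem (hne l))
  simpa using Fintype.card_le_of_injective _ hinj

theorem HasDisjointPaths.le_maxDisjointPaths (h : HasDisjointPaths E R C n) :
    n ≤ maxDisjointPaths E R C :=
  le_csSup ⟨Fintype.card V, fun _ hm => hm.le_card⟩ h

end DisjointPaths

theorem stmt_11_general {V : Type*} [Fintype V] [DecidableEq V]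
    (E : Finset (V × V))
    (R C : Finset V) :
    ∀ G ∈ ModelSet E,
      (Matrix.of fun (c : {c : V // c ∈ C}) (r : {r : V // r ∈ R}) =>
        netT G c.1 r.1).rank ≤ maxDisjointPaths E R C := by
  rintro G ⟨hG, hunit⟩
  obtain ⟨f, g, -, hg, hfg⟩ := Matrix.exists_isUnit_submatrix_rank
    (Matrix.of fun (c : {c : V // c ∈ C}) (r : {r : V // r ∈ R}) => netT G c.1 r.1)
  set r : Fin _ → V := Subtype.val ∘ g
  set c : Fin _ → V := Subtype.val ∘ f
  have hr : Injective r := Subtype.val_injective.comp hg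
  have hTA : netT G * (1 - G) = 1 := nonsing_inv_mul _ ((isUnit_iff_isUnit_det _).mp hunit)
  obtain ⟨σ, hσ⟩ := Matrix.exists_perm_forall_ne_zero_of_det_ne_zero
    (Matrix.det_replaceRows_ne_zero (c := c) hTA hr hfg)
  have hstep (v : V) (hv : σ v ∉ Set.range r) : σ v = v ∨ (v, σ v) ∈ E := by
    have h := hσ v
    rw [Matrix.replaceRows_apply_of_notMem hv] at h
    by_cases hfix : σ v = v
    · exact Or.inl hfix
    · rw [Matrix.sub_apply, Matrix.one_apply_ne hfix, zero_sub, neg_ne_zero, hG] at h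
      exact Or.inr h
  have hend (k : Fin _) : σ.symm (r k) ∈ C := by
    have h := hσ (σ.symm (r k))
    rw [Equiv.apply_symm_apply, Matrix.replaceRows_apply_row hr, ite_ne_right_iff] at h
    exact h.1 ▸ (f k).2
  exact (σ.hasDisjointPaths hr hstep (fun k => (g k).2) hend).le_maxDisjointPaths

/-- For every model `G ∈ M(E)`, the rank of the submatrix `T(G)_{C,R}` is at most
`b(R→C)`, the maximum number of pairwise vertex-disjoint directed paths from `R` to `C`. -/
theorem stmt_11 {V : Type*} [Fintype V] [DecidableEq V]
    (E : Finset (V × V)) (hloop : ∀ i : V, (i, i) ∉ E)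
    (R C : Finset V) :
    ∀ G ∈ ModelSet E,
      (Matrix.of fun (c : {c : V // c ∈ C}) (r : {r : V // r ∈ R}) =>
        netT G c.1 r.1).rank ≤ maxDisjointPaths E R C :=
  stmt_11_general E R C
end

section
/- Let F be a field, L ≥ 3, V = ZMod L, and let g : V → F be arbitrary. Let G : Matrix V V F be the matrix with G (u+1) u = g u for all u ∈ V and all other entries zero, and set φ = ∏_{u ∈ V} g u. If φ ≠ 1, then I − G is invertible and for all i, j ∈ V the entry (I − G)⁻¹ j i equals (1 − φ)⁻¹ times the product of the modules along the forward path from i to j, i.e., (1 − φ)⁻¹ · ∏_{t = 0}^{d−1} g (i + t), where d is the representative in {0, 1, …, L−1} of j − i in ZMod L (an empty product, equal to 1, when j = i). -/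
/-!
Take `B j i = (1 - φ)⁻¹ · P i j`, where `P i j` is the product of the modules along the forward
path from `i` to `j`. Row `j` of `(1 - G) * B` is `B j i - g (j - 1) * B (j - 1) i`, and appending
the edge `j - 1 → j` to the path from `i` to `j - 1` gives the path from `i` to `j`, except for
`j = i`, where it closes the whole cycle and produces `φ`. Hence `(1 - G) * B = 1`.
-/

open Matrix Finset

theorem ZMod.val_sub_one_add_one {L : ℕ} [NeZero L] (d : ZMod L) :
    (d - 1).val + 1 = if d = 0 then L else d.val := by
  obtain ⟨n, rfl⟩ := Nat.exists_eq_succ_of_ne_zero (NeZero.ne L)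
  split_ifs with hd
  · rw [hd, zero_sub, ZMod.val_neg_one]
  · have hpos : 0 < d.val := Nat.pos_of_ne_zero (by simpa [Fin.ext_iff] using hd)
    rw [← Nat.sub_add_cancel hpos]
    exact congrArg (· + 1) (Fin.val_sub_one_of_ne_zero (i := (d : Fin (n + 1))) hd)

section PathProd

variable {L : ℕ} {M : Type*} [CommMonoid M] (g : ZMod L → M)

def pathProd (i : ZMod L) (n : ℕ) : M := ∏ t ∈ range n, g (i + t)

theorem pathProd_zero (i : ZMod L) : pathProd g i 0 = 1 :=
  prod_range_zero _

theorem pathProd_succ (i : ZMod L) (n : ℕ) :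
    pathProd g i (n + 1) = pathProd g i n * g (i + n) :=
  prod_range_succ _ _

theorem pathProd_self [NeZero L] (i : ZMod L) : pathProd g i L = ∏ u, g u := by
  obtain ⟨n, rfl⟩ := Nat.exists_eq_succ_of_ne_zero (NeZero.ne L)
  rw [pathProd, ← Fin.prod_univ_eq_prod_range (fun t => g (i + t))]
  exact Fintype.prod_equiv (Equiv.addLeft i) _ _ fun x =>
    congrArg (fun u => g (i + u)) (ZMod.natCast_zmod_val x)

theorem pathProd_val_sub_one_mul [NeZero L] (i d : ZMod L) :
    pathProd g i (d - 1).val * g (i + (d - 1)) =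
      if d = 0 then ∏ u, g u else pathProd g i d.val := by
  have h := pathProd_succ g i (d - 1).val
  rw [ZMod.natCast_zmod_val, ZMod.val_sub_one_add_one] at h
  rw [← h]
  split_ifs
  · exact pathProd_self g i
  · rfl

end PathProd

section WeightedShift

variable {ι R : Type*}

def weightedShift [AddGroupWithOne ι] [DecidableEq ι] [Zero R] (g : ι → R) : Matrix ι ι R :=
  of fun j i => if j = i + 1 then g i else 0

theorem weightedShift_mul_apply [AddGroupWithOne ι] [Fintype ι] [DecidableEq ι]
    [NonUnitalNonAssocSemiring R] (g : ι → R) (M : Matrix ι ι R) (j i : ι) :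
    (weightedShift g * M) j i = g (j - 1) * M (j - 1) i := by
  simp_rw [mul_apply, weightedShift, of_apply, eq_comm (a := j), ← eq_sub_iff_add_eq, ite_mul,
    zero_mul]
  simp

end WeightedShift

theorem one_sub_weightedShift_mul_eq_one {L : ℕ} [NeZero L] {F : Type*} [Field F]
    (g : ZMod L → F) (hφ : ∏ u, g u ≠ 1) :
    (1 - weightedShift g) * of (fun j i => (1 - ∏ u, g u)⁻¹ * pathProd g i (j - i).val) =
      1 := by
  ext j i
  have key := pathProd_val_sub_one_mul g i (j - i)
  rw [show i + (j - i - 1) = j - 1 by ring] at key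
  simp only [sub_eq_zero] at key
  rw [sub_mul, one_mul, Matrix.sub_apply, weightedShift_mul_apply, of_apply, of_apply, one_apply,
    sub_right_comm]
  calc _ = (1 - ∏ u, g u)⁻¹ *
        (pathProd g i (j - i).val - pathProd g i (j - i - 1).val * g (j - 1)) := by ring
    _ = if j = i then 1 else 0 := by
      rw [key]
      split_ifs with hji
      · subst hji
        rw [sub_self, ZMod.val_zero, pathProd_zero]
        exact inv_mul_cancel₀ (sub_ne_zero.2 hφ.symm)
      · rw [sub_self, mul_zero]

theorem stmt_15_general (F : Type*) [Field F] (L : ℕ) [NeZero L]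
    (g : ZMod L → F)
    (G : Matrix (ZMod L) (ZMod L) F)
    (hG : ∀ j i : ZMod L, G j i = if j = i + 1 then g i else 0)
    (φ : F) (hφdef : φ = ∏ u : ZMod L, g u) (hφ : φ ≠ 1) :
    IsUnit (1 - G) ∧
      ∀ i j : ZMod L, (1 - G)⁻¹ j i =
        (1 - φ)⁻¹ * ∏ t ∈ Finset.range ((j - i).val), g (i + (t : ZMod L)) := by
  obtain rfl : G = weightedShift g := ext hG
  subst hφdef
  have hinv := one_sub_weightedShift_mul_eq_one g hφ
  exact ⟨.of_mul_eq_one _ hinv, fun i j => by rw [inv_eq_right_inv hinv]; rfl⟩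

/-- Explicit inverse of `I - G` for a directed circular network on `ZMod L` (`L ≥ 3`) with
cycle modules `g u` on the positions `(u+1, u)`: if the loop transfer function
`φ = ∏ u, g u` is not `1`, then `I - G` is invertible and
`(I - G)⁻¹ j i = (1 - φ)⁻¹ · ∏_{t=0}^{d-1} g (i + t)`, where `d ∈ {0, …, L-1}` is the
representative of `j - i` in `ZMod L` (an empty product, equal to `1`, when `j = i`). -/
theorem stmt_15 (F : Type*) [Field F] (L : ℕ) [NeZero L] (hL : 3 ≤ L)
    (g : ZMod L → F)
    (G : Matrix (ZMod L) (ZMod L) F)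
    (hG : ∀ j i : ZMod L, G j i = if j = i + 1 then g i else 0)
    (φ : F) (hφdef : φ = ∏ u : ZMod L, g u) (hφ : φ ≠ 1) :
    IsUnit (1 - G) ∧
      ∀ i j : ZMod L, (1 - G)⁻¹ j i =
        (1 - φ)⁻¹ * ∏ t ∈ Finset.range ((j - i).val), g (i + (t : ZMod L)) :=
  stmt_15_general F L g G hG φ hφdef hφ
end

section
/- Let V = {1,2,3,4} and E = {(1,2), (1,3), (2,4), (3,4)}, with R = {1,2} and C = {3,4}. Then the model set M(E) is not identifiable from (R, C): there exist G₀ ≠ G₁ in M(E) with (T(G₀)) c r = (T(G₁)) c r for all c ∈ C, r ∈ R. -/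
/-!
In the diamond `1 → 2 → 4`, `1 → 3 → 4` every `G` is nilpotent, so `T(G) = I + G + G²` and
the measured block `T_{C,R}` only records `g₃₁`, `g₄₂` and the path sum
`g₄₂ g₂₁ + g₄₃ g₃₁`. With `g₃₁ = g₄₂ = 1` only `g₂₁ + g₄₃` is seen, so the weights
`(g₂₁, g₄₃) = (1, 1)` and `(3, -1)` give distinct models with the same measurements.
Vertex `k` of the informal statement is `k - 1 : Fin 4` below.
-/

open Matrix

section General

variable {V : Type*} [Fintype V] [DecidableEq V]

theorem netT_eq_of_mul_eq_one {G T : Matrix V V (RatFunc ℝ)} (h : (1 - G) * T = 1) :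
    netT G = T :=
  Matrix.inv_eq_right_inv h

theorem mem_modelSet_of_mul_eq_one {E : Finset (V × V)} {G T : Matrix V V (RatFunc ℝ)}
    (hG : ∀ i j : V, G j i ≠ 0 ↔ (i, j) ∈ E) (h : (1 - G) * T = 1) : G ∈ ModelSet E :=
  ⟨hG, (Matrix.isUnit_iff_isUnit_det _).2 (Matrix.isUnit_det_of_right_inverse h)⟩

theorem not_identifiable_of_ne {E : Finset (V × V)} {R C : Finset V}
    {G₀ G₁ : Matrix V V (RatFunc ℝ)} (h₀ : G₀ ∈ ModelSet E) (h₁ : G₁ ∈ ModelSet E)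
    (hne : G₀ ≠ G₁) (hT : ∀ c ∈ C, ∀ r ∈ R, netT G₀ c r = netT G₁ c r) : ¬ Identifiable E R C :=
  fun hid => hne (hid G₁ h₁ G₀ h₀ hT)

end General

section Diamond

variable (a b c d : RatFunc ℝ)

noncomputable def diamondModel : Matrix (Fin 4) (Fin 4) (RatFunc ℝ) :=
  !![0, 0, 0, 0; a, 0, 0, 0; b, 0, 0, 0; 0, c, d, 0]

theorem one_sub_diamondModel_mul :
    (1 - diamondModel a b c d) * !![1, 0, 0, 0; a, 1, 0, 0; b, 0, 1, 0; a * c + b * d, c, d, 1]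
      = 1 := by
  ext i j
  fin_cases i <;> fin_cases j <;>
    simp [diamondModel, Matrix.mul_apply, Fin.sum_univ_four, Matrix.one_apply]
  ring

theorem netT_diamondModel :
    netT (diamondModel a b c d)
      = !![1, 0, 0, 0; a, 1, 0, 0; b, 0, 1, 0; a * c + b * d, c, d, 1] :=
  netT_eq_of_mul_eq_one (one_sub_diamondModel_mul a b c d)

variable {a b c d}

theorem diamondModel_mem_modelSet (ha : a ≠ 0) (hb : b ≠ 0) (hc : c ≠ 0) (hd : d ≠ 0) :
    diamondModel a b c d ∈
      ModelSet ({(0, 1), (0, 2), (1, 3), (2, 3)} : Finset (Fin 4 × Fin 4)) := by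
  refine mem_modelSet_of_mul_eq_one (fun i j => ?_) (one_sub_diamondModel_mul a b c d)
  fin_cases i <;> fin_cases j <;> simp [diamondModel, ha, hb, hc, hd]

theorem netT_diamondModel_eq_of_pathSum_eq {a' d' : RatFunc ℝ}
    (h : a * c + b * d = a' * c + b * d') :
    ∀ i ∈ ({2, 3} : Finset (Fin 4)), ∀ j ∈ ({0, 1} : Finset (Fin 4)),
      netT (diamondModel a b c d) i j = netT (diamondModel a' b c d') i j := by
  intro i hi j hj
  rw [netT_diamondModel, netT_diamondModel]
  fin_cases hi <;> fin_cases hj <;> simp [h]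

end Diamond

/-- The four-vertex network of Example 1 (vertices `0,1,2,3` standing for `1,2,3,4`, with
edges `(1,2), (1,3), (2,4), (3,4)`, excited vertices `R = {1,2}` and measured vertices
`C = {3,4}`) is not identifiable: there are two distinct models in `M(E)` with the same
response submatrix `T_{C,R}`. -/
theorem stmt_17
    (E : Finset (Fin 4 × Fin 4))
    (hE : E = {(0, 1), (0, 2), (1, 3), (2, 3)})
    (R C : Finset (Fin 4)) (hR : R = {0, 1}) (hC : C = {2, 3}) :
    ¬ Identifiable E R C ∧
      ∃ G₀ ∈ ModelSet E, ∃ G₁ ∈ ModelSet E, G₀ ≠ G₁ ∧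
        ∀ c ∈ C, ∀ r ∈ R, netT G₀ c r = netT G₁ c r := by
  subst hE hR hC
  have h₀ := diamondModel_mem_modelSet one_ne_zero one_ne_zero one_ne_zero one_ne_zero
  have h₁ := diamondModel_mem_modelSet (three_ne_zero (α := RatFunc ℝ)) one_ne_zero one_ne_zero
    (neg_ne_zero.2 one_ne_zero)
  have hne : diamondModel 1 1 1 1 ≠ diamondModel 3 1 1 (-1) := fun h => by
    simpa [diamondModel] using congrFun (congrFun h 1) 0
  have hT := netT_diamondModel_eq_of_pathSum_eq (a := 1) (b := 1) (c := 1) (d := 1) (a' := 3)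
    (d' := -1) (by norm_num)
  exact ⟨not_identifiable_of_ne h₀ h₁ hne hT, _, h₀, _, h₁, hne, hT⟩
end

section
/- Let V = {1,…,8} and E = {(1,2), (2,3), (3,4), (1,5), (2,6), (3,7), (4,8), (5,6), (6,7), (7,8)}, with R = {1,2,3,4} and C = {5,6,7,8}. Then the model set M(E) is not identifiable from (R, C): there exist G₀ ≠ G₁ in M(E) with (T(G₀)) c r = (T(G₁)) c r for all c ∈ C, r ∈ R. -/
open Matrix

/-!
The response `T c r` is the sum, over directed paths from `r` to `c`, of the products of the
edge weights. The graph is a ladder: a top chain `1 → 2 → 3 → 4`, a bottom chain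
`5 → 6 → 7 → 8` and rungs `k → k + 4`, so a path from an excited to a measured vertex runs `a`
steps along the top, takes one rung and runs `b` steps along the bottom, with `a + b` fixed by
its endpoints. Giving weight `2` to the bottom chain (`G₀`) or to the top chain (`G₁`), and `1`
to all other edges, gives the path the weight `2 ^ b` or `2 ^ a`; as the rung varies, both run
over `1, 2, …, 2 ^ (a + b)`, so the two responses agree on `C × R`. Both models have integer
entries, and their inverses are verified as integer certificates `(1 - G) * T = 1`.
-/

section ModelSet

variable {V : Type*} [Fintype V] [DecidableEq V]

theorem map_intCast_one_sub_mul_eq_one {R : Type*} [Ring R] {A B : Matrix V V ℤ}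
    (h : (1 - A) * B = 1) : (1 - A.map (Int.cast : ℤ → R)) * B.map Int.cast = 1 := by
  have h' := congrArg (Int.castRingHom R).mapMatrix h
  rwa [map_mul, map_sub, map_one] at h'

theorem netT_map_intCast {A B : Matrix V V ℤ} (h : (1 - A) * B = 1) :
    netT (A.map Int.cast) = B.map Int.cast :=
  Matrix.inv_eq_right_inv (map_intCast_one_sub_mul_eq_one h)

theorem map_intCast_mem_modelSet {E : Finset (V × V)} {A B : Matrix V V ℤ}
    (hA : ∀ i j, A j i ≠ 0 ↔ (i, j) ∈ E) (h : (1 - A) * B = 1) :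
    A.map Int.cast ∈ ModelSet E :=
  ⟨fun i j => by simpa using hA i j, (Matrix.isUnit_iff_isUnit_det _).2
    (Matrix.isUnit_det_of_right_inverse (map_intCast_one_sub_mul_eq_one h))⟩

end ModelSet

namespace LadderNetwork

def edges : Finset (Fin 8 × Fin 8) :=
  {(0, 1), (1, 2), (2, 3), (0, 4), (1, 5), (2, 6), (3, 7), (4, 5), (5, 6), (6, 7)}

def G₀ : Matrix (Fin 8) (Fin 8) ℤ :=
  !![0, 0, 0, 0, 0, 0, 0, 0;
     1, 0, 0, 0, 0, 0, 0, 0;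
     0, 1, 0, 0, 0, 0, 0, 0;
     0, 0, 1, 0, 0, 0, 0, 0;
     1, 0, 0, 0, 0, 0, 0, 0;
     0, 1, 0, 0, 2, 0, 0, 0;
     0, 0, 1, 0, 0, 2, 0, 0;
     0, 0, 0, 1, 0, 0, 2, 0]

def T₀ : Matrix (Fin 8) (Fin 8) ℤ :=
  !![1, 0, 0, 0, 0, 0, 0, 0;
     1, 1, 0, 0, 0, 0, 0, 0;
     1, 1, 1, 0, 0, 0, 0, 0;
     1, 1, 1, 1, 0, 0, 0, 0;
     1, 0, 0, 0, 1, 0, 0, 0;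
     3, 1, 0, 0, 2, 1, 0, 0;
     7, 3, 1, 0, 4, 2, 1, 0;
     15, 7, 3, 1, 8, 4, 2, 1]

def G₁ : Matrix (Fin 8) (Fin 8) ℤ :=
  !![0, 0, 0, 0, 0, 0, 0, 0;
     2, 0, 0, 0, 0, 0, 0, 0;
     0, 2, 0, 0, 0, 0, 0, 0;
     0, 0, 2, 0, 0, 0, 0, 0;
     1, 0, 0, 0, 0, 0, 0, 0;
     0, 1, 0, 0, 1, 0, 0, 0;
     0, 0, 1, 0, 0, 1, 0, 0;
     0, 0, 0, 1, 0, 0, 1, 0]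

def T₁ : Matrix (Fin 8) (Fin 8) ℤ :=
  !![1, 0, 0, 0, 0, 0, 0, 0;
     2, 1, 0, 0, 0, 0, 0, 0;
     4, 2, 1, 0, 0, 0, 0, 0;
     8, 4, 2, 1, 0, 0, 0, 0;
     1, 0, 0, 0, 1, 0, 0, 0;
     3, 1, 0, 0, 1, 1, 0, 0;
     7, 3, 1, 0, 1, 1, 1, 0;
     15, 7, 3, 1, 1, 1, 1, 1]

theorem one_sub_G₀_mul_T₀ : (1 - G₀) * T₀ = 1 :=
  Matrix.ext fun i j => by fin_cases i <;> fin_cases j <;> decide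

theorem one_sub_G₁_mul_T₁ : (1 - G₁) * T₁ = 1 :=
  Matrix.ext fun i j => by fin_cases i <;> fin_cases j <;> decide

theorem G₀_ne_zero_iff : ∀ i j, G₀ j i ≠ 0 ↔ (i, j) ∈ edges := by decide

theorem G₁_ne_zero_iff : ∀ i j, G₁ j i ≠ 0 ↔ (i, j) ∈ edges := by decide

theorem G₀_ne_G₁ : G₀ ≠ G₁ := fun h => absurd (congrFun (congrFun h 1) 0) (by decide)

theorem T₀_eq_T₁_of_mem : ∀ c ∈ ({4, 5, 6, 7} : Finset (Fin 8)),
    ∀ r ∈ ({0, 1, 2, 3} : Finset (Fin 8)), T₀ c r = T₁ c r := by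
  intro c hc r hr
  fin_cases hc <;> fin_cases hr <;> decide

end LadderNetwork

open LadderNetwork in
/-- The eight-vertex network of Example 2 (vertices `0,…,7` standing for `1,…,8`, with
edges `(1,2), (2,3), (3,4), (1,5), (2,6), (3,7), (4,8), (5,6), (6,7), (7,8)`, excited
vertices `R = {1,2,3,4}` and measured vertices `C = {5,6,7,8}`) is not identifiable: there
are two distinct models in `M(E)` with the same response submatrix `T_{C,R}`. -/
theorem stmt_19
    (E : Finset (Fin 8 × Fin 8))
    (hE : E = {(0, 1), (1, 2), (2, 3), (0, 4), (1, 5), (2, 6), (3, 7), (4, 5), (5, 6), (6, 7)})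
    (R C : Finset (Fin 8)) (hR : R = {0, 1, 2, 3}) (hC : C = {4, 5, 6, 7}) :
    ¬ Identifiable E R C ∧
      ∃ G₀ ∈ ModelSet E, ∃ G₁ ∈ ModelSet E, G₀ ≠ G₁ ∧
        ∀ c ∈ C, ∀ r ∈ R, netT G₀ c r = netT G₁ c r := by
  subst hE hR hC
  have h₀ : (G₀.map Int.cast : Matrix _ _ (RatFunc ℝ)) ∈ ModelSet edges :=
    map_intCast_mem_modelSet G₀_ne_zero_iff one_sub_G₀_mul_T₀
  have h₁ : (G₁.map Int.cast : Matrix _ _ (RatFunc ℝ)) ∈ ModelSet edges :=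
    map_intCast_mem_modelSet G₁_ne_zero_iff one_sub_G₁_mul_T₁
  have hne : (G₀.map Int.cast : Matrix _ _ (RatFunc ℝ)) ≠ G₁.map Int.cast :=
    (Matrix.map_injective Int.cast_injective).ne G₀_ne_G₁
  have hT : ∀ c ∈ ({4, 5, 6, 7} : Finset (Fin 8)), ∀ r ∈ ({0, 1, 2, 3} : Finset (Fin 8)),
      netT (G₀.map Int.cast) c r = netT (G₁.map Int.cast) c r := by
    intro c hc r hr
    rw [netT_map_intCast one_sub_G₀_mul_T₀, netT_map_intCast one_sub_G₁_mul_T₁, map_apply,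
      map_apply, T₀_eq_T₁_of_mem c hc r hr]
  exact ⟨not_identifiable_of_ne h₀ h₁ hne hT, _, h₀, _, h₁, hne, hT⟩
end
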